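/- arXiv:1402.6528 — 3 statements merged into one kernel-verified Lean document; each statement's English description precedes it below -/
import Mathlib

section
/- For any Hermitian element a of a unital C*-algebra and any k ≥ 1, Δ_k(a) := max_{ω∈S(A)} ω(|a − ω(a)|^k)^{1/k} satisfies Δ_k(a) ≤ ‖q_k‖_∞^{1/k} · diam σ(a), where q_k(x) = x(1−x)^k + x^k(1−x). -/
open scoped ComplexOrder

variable {A : Type*} [CStarAlgebra A] [PartialOrder A] [StarOrderedRing A]

/-- A state of a unital C*-algebra: a unital positive linear functional. -/
def IsState (φ : A →ₗ[ℂ] ℂ) : Prop :=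
  φ 1 = 1 ∧ ∀ b : A, 0 ≤ φ (star b * b)

/-- The absolute value `|b| = (b* b)^(1/2)` in a C*-algebra. -/
noncomputable def cstarAbs (b : A) : A := CFC.sqrt (star b * b)

private lemma key_pointwise {m M c x : ℝ} (k : ℕ) (hmx : m ≤ x) (hxM : x ≤ M)
    (hmc : m ≤ c) (hcM : c ≤ M) (hD : m < M) :
    |x - c| ^ k ≤ ((M - x) * (c - m) ^ k + (x - m) * (M - c) ^ k) / (M - m) := by
  have hD0 : (0:ℝ) < M - m := sub_pos.2 hD
  set w₁ : ℝ := (M - x) / (M - m) with hw₁def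
  set w₂ : ℝ := (x - m) / (M - m) with hw₂def
  have hw₁ : 0 ≤ w₁ := div_nonneg (by linarith) hD0.le
  have hw₂ : 0 ≤ w₂ := div_nonneg (by linarith) hD0.le
  have hsum : w₁ + w₂ = 1 := by
    rw [hw₁def, hw₂def, ← add_div, div_eq_one_iff_eq hD0.ne']; ring
  have habs : |x - c| ≤ w₁ * (c - m) + w₂ * (M - c) := by
    have hx : x - c = w₁ * (m - c) + w₂ * (M - c) := by
      rw [hw₁def, hw₂def]; field_simp; ring
    calc |x - c| = |w₁ * (m - c) + w₂ * (M - c)| := by rw [hx]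
      _ ≤ |w₁ * (m - c)| + |w₂ * (M - c)| := abs_add_le _ _
      _ = w₁ * (c - m) + w₂ * (M - c) := by
          rw [abs_mul, abs_mul, abs_of_nonneg hw₁, abs_of_nonneg hw₂,
            abs_of_nonpos (by linarith : m - c ≤ 0), abs_of_nonneg (by linarith : (0:ℝ) ≤ M - c)]
          ring
  have hconv := (convexOn_pow (𝕜 := ℝ) k).2 (Set.mem_Ici.2 (by linarith : (0:ℝ) ≤ c - m))
    (Set.mem_Ici.2 (by linarith : (0:ℝ) ≤ M - c)) hw₁ hw₂ hsum
  simp only [smul_eq_mul] at hconv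
  have h1 : |x - c| ^ k ≤ (w₁ * (c - m) + w₂ * (M - c)) ^ k :=
    pow_le_pow_left₀ (abs_nonneg _) habs k
  calc |x - c| ^ k ≤ w₁ * (c - m) ^ k + w₂ * (M - c) ^ k := h1.trans hconv
    _ = ((M - x) * (c - m) ^ k + (x - m) * (M - c) ^ k) / (M - m) := by
        rw [hw₁def, hw₂def]; field_simp; try ring

/-- For a Hermitian element `a` of a unital C*-algebra and `k ≥ 1`,
`Δ_k(a) = max_ω ω(|a - ω(a)|^k)^{1/k} ≤ ‖q_k‖_∞^{1/k} · diam σ(a)`. -/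
theorem Delta_le_of_hermitian (a : A) (ha : IsSelfAdjoint a) (k : ℕ) (hk : 1 ≤ k)
    (φ : A →ₗ[ℂ] ℂ) (hφ : IsState φ) :
    (φ (cstarAbs (a - φ a • (1 : A)) ^ k)).re ^ ((1 : ℝ) / k)
      ≤ (sSup ((fun x : ℝ => x * (1 - x) ^ k + x ^ k * (1 - x)) '' Set.Icc 0 1))
          ^ ((1 : ℝ) / k) * Metric.diam (spectrum ℝ a) := by
  obtain ⟨hφ1, hφpos⟩ := hφ
  have hknz : (k : ℝ) ≠ 0 := Nat.cast_ne_zero.2 (by omega)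
  -- the sup of q_k
  set q : ℝ → ℝ := fun x : ℝ => x * (1 - x) ^ k + x ^ k * (1 - x) with hq
  set S : ℝ := sSup (q '' Set.Icc 0 1) with hS
  have hqc : ContinuousOn q (Set.Icc 0 1) := by fun_prop
  have hbddS : BddAbove (q '' Set.Icc 0 1) :=
    (isCompact_Icc.image_of_continuousOn hqc).bddAbove
  have hS0 : 0 ≤ S := by
    have h0 : q 0 ∈ q '' Set.Icc 0 1 := ⟨0, Set.left_mem_Icc.2 zero_le_one, rfl⟩
    have : q 0 = 0 := by simp [hq, zero_pow (by omega : k ≠ 0)]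
    exact this ▸ le_csSup hbddS h0
  -- A is nontrivial
  have hnt : Nontrivial A := by
    refine ⟨1, 0, fun h => one_ne_zero (α := ℂ) ?_⟩
    rw [← hφ1, h, map_zero]
  -- positivity of φ
  have hpos : ∀ x : A, 0 ≤ x → 0 ≤ φ x := by
    intro x hx
    rw [StarOrderedRing.nonneg_iff] at hx
    induction hx using AddSubmonoid.closure_induction with
    | mem y hy => obtain ⟨s, rfl⟩ := hy; exact hφpos s
    | zero => simp
    | add y z _ _ hy hz => rw [map_add]; exact add_nonneg hy hz
  have hmono : ∀ x y : A, x ≤ y → (φ x).re ≤ (φ y).re := by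
    intro x y hxy
    have h := hpos _ (sub_nonneg.2 hxy)
    rw [map_sub, Complex.le_def] at h
    simp only [Complex.zero_re, Complex.sub_re] at h
    linarith [h.1]
  have him : ∀ x y : A, x ≤ y → (φ x).im = (φ y).im := by
    intro x y hxy
    have h := hpos _ (sub_nonneg.2 hxy)
    rw [map_sub, Complex.le_def] at h
    simp only [Complex.zero_im, Complex.sub_im] at h
    linarith [h.2.symm]
  -- φ of real scalars
  have hφalg : ∀ r : ℝ, φ (algebraMap ℝ A r) = (r : ℂ) := by
    intro r
    rw [Algebra.algebraMap_eq_smul_one, ← Complex.coe_smul, map_smul, hφ1, smul_eq_mul, mul_one]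
  -- spectrum facts
  have hspec_ne : (spectrum ℝ a).Nonempty := ha.spectrum_nonempty
  have hcpt : IsCompact (spectrum ℝ a) := spectrum.isCompact a
  set m : ℝ := sInf (spectrum ℝ a) with hm
  set M : ℝ := sSup (spectrum ℝ a) with hM
  have hm_mem : m ∈ spectrum ℝ a := hcpt.sInf_mem hspec_ne
  have hM_mem : M ∈ spectrum ℝ a := hcpt.sSup_mem hspec_ne
  have hspec_le : ∀ x ∈ spectrum ℝ a, m ≤ x ∧ x ≤ M := fun x hx =>
    ⟨csInf_le hcpt.bddBelow hx, le_csSup hcpt.bddAbove hx⟩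
  have hmM : m ≤ M := (hspec_le m hm_mem).2
  have halg_le : algebraMap ℝ A m ≤ a := algebraMap_le_of_le_spectrum fun x hx => (hspec_le x hx).1
  have hle_alg : a ≤ algebraMap ℝ A M := le_algebraMap_of_spectrum_le fun x hx => (hspec_le x hx).2
  -- φ a is real, lying in [m, M]
  set c : ℝ := (φ a).re with hc
  have hφa_im : (φ a).im = 0 := by
    have := him _ _ hle_alg
    rw [hφalg] at this
    simpa using this
  have hφa : φ a = (c : ℂ) := Complex.ext rfl (by simpa using hφa_im)
  have hmc : m ≤ c := by
    have := hmono _ _ halg_le; rw [hφalg] at this; simpa using this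
  have hcM : c ≤ M := by
    have := hmono _ _ hle_alg; rw [hφalg] at this; simpa using this
  -- rewrite the element inside φ using cfc
  have hb : a - φ a • (1 : A) = cfc (fun x : ℝ => x - c) a := by
    rw [cfc_sub (fun x : ℝ => x) (fun _ : ℝ => c) a, cfc_id' ℝ a, cfc_const c a,
      hφa, Algebra.algebraMap_eq_smul_one, Complex.coe_smul]
  have habs : cstarAbs (a - φ a • (1 : A)) = cfc (fun x : ℝ => |x - c|) a := by
    have hmul : star (a - φ a • (1 : A)) * (a - φ a • (1 : A))
        = cfc (fun x : ℝ => |x - c|) a * cfc (fun x : ℝ => |x - c|) a := by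
      rw [hb, ← cfc_mul _ _ a, (cfc_predicate (fun x : ℝ => x - c) a).star_eq, ← cfc_mul _ _ a]
      exact cfc_congr fun x _ => (abs_mul_abs_self _).symm
    rw [cstarAbs, hmul, CFC.sqrt_mul_self _ (cfc_nonneg fun x _ => abs_nonneg _)]
  have hpow : cstarAbs (a - φ a • (1 : A)) ^ k = cfc (fun x : ℝ => |x - c| ^ k) a := by
    rw [habs, ← cfc_pow _ k a]
  have hLHS0 : 0 ≤ (φ (cstarAbs (a - φ a • (1 : A)) ^ k)).re := by
    have h := hpos _ (hpow ▸ cfc_nonneg (a := a) fun x _ => pow_nonneg (abs_nonneg _) k)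
    rw [Complex.le_def] at h
    simpa using h.1
  rcases eq_or_lt_of_le hmM with hdeg | hD
  · -- degenerate case: spectrum is a single point
    have hc_eq : c = m := le_antisymm (hdeg ▸ hcM) hmc
    have hzero : cfc (fun x : ℝ => |x - c| ^ k) a = 0 := by
      have : cfc (fun x : ℝ => |x - c| ^ k) a = cfc (fun _ : ℝ => (0:ℝ)) a :=
        cfc_congr fun x hx => by
          have h1 := (hspec_le x hx).1
          have h2 := (hspec_le x hx).2
          have : x = c := by rw [hc_eq]; linarith [hdeg ▸ h2]
          simp [this, zero_pow (by omega : k ≠ 0)]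
      rw [this, cfc_const 0 a, map_zero]
    rw [hpow, hzero, map_zero, Complex.zero_re,
      Real.zero_rpow (by positivity : (1:ℝ)/k ≠ 0)]
    exact mul_nonneg (Real.rpow_nonneg hS0 _) Metric.diam_nonneg
  · -- main case
    have hD0 : (0:ℝ) < M - m := sub_pos.2 hD
    set u : ℝ := (M * (c - m) ^ k - m * (M - c) ^ k) / (M - m) with hu
    set v : ℝ := ((M - c) ^ k - (c - m) ^ k) / (M - m) with hv
    have hkey : cfc (fun x : ℝ => |x - c| ^ k) a ≤ cfc (fun x : ℝ => u + v * x) a := by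
      refine cfc_mono (fun x hx => ?_) (by fun_prop) (by fun_prop)
      have h := key_pointwise k (hspec_le x hx).1 (hspec_le x hx).2 hmc hcM hD
      calc |x - c| ^ k ≤ ((M - x) * (c - m) ^ k + (x - m) * (M - c) ^ k) / (M - m) := h
        _ = u + v * x := by rw [hu, hv]; field_simp [hD0.ne']; ring
    have hcfc_aff : cfc (fun x : ℝ => u + v * x) a = algebraMap ℝ A u + v • a := by
      rw [cfc_const_add u (fun x : ℝ => v * x) a, cfc_const_mul_id v a]
    have hφaff : (φ (cfc (fun x : ℝ => u + v * x) a)).re = u + v * c := by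
      rw [hcfc_aff, map_add, hφalg]
      have : φ (v • a) = (v : ℂ) * φ a := by
        rw [← Complex.coe_smul, map_smul, smul_eq_mul]
      rw [this, hφa]
      push_cast
      simp
    -- the value u + v * c equals (M-m)^k * q t with t = (c - m)/(M - m)
    set t : ℝ := (c - m) / (M - m) with ht
    have ht0 : 0 ≤ t := div_nonneg (by linarith) hD0.le
    have ht1 : t ≤ 1 := (div_le_one hD0).2 (by linarith)
    have hcm : c - m = t * (M - m) := by rw [ht]; field_simp
    have hMc : M - c = (1 - t) * (M - m) := by rw [ht]; field_simp; try ring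
    have hval : u + v * c = (M - m) ^ k * q t := by
      have h1 : u + v * c = ((M - c) * (c - m) ^ k + (c - m) * (M - c) ^ k) / (M - m) := by
        rw [hu, hv]; field_simp [hD0.ne']; ring
      rw [h1, hcm, hMc, hq]
      rw [mul_pow, mul_pow, div_eq_iff hD0.ne']
      ring
    have hqt : q t ≤ S := le_csSup hbddS ⟨t, Set.mem_Icc.2 ⟨ht0, ht1⟩, rfl⟩
    have hmain : (φ (cstarAbs (a - φ a • (1 : A)) ^ k)).re ≤ (M - m) ^ k * S := by
      calc (φ (cstarAbs (a - φ a • (1 : A)) ^ k)).re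
          ≤ (φ (cfc (fun x : ℝ => u + v * x) a)).re := by
            rw [hpow]; exact hmono _ _ hkey
        _ = (M - m) ^ k * q t := by rw [hφaff, hval]
        _ ≤ (M - m) ^ k * S := by
            exact mul_le_mul_of_nonneg_left hqt (by positivity)
    -- take k-th roots
    have hdiam : M - m ≤ Metric.diam (spectrum ℝ a) := by
      have := Metric.dist_le_diam_of_mem hcpt.isBounded hM_mem hm_mem
      rwa [Real.dist_eq, abs_of_nonneg (by linarith)] at this
    calc (φ (cstarAbs (a - φ a • (1 : A)) ^ k)).re ^ ((1:ℝ)/k)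
        ≤ ((M - m) ^ k * S) ^ ((1:ℝ)/k) :=
          Real.rpow_le_rpow hLHS0 hmain (by positivity)
      _ = S ^ ((1:ℝ)/k) * (M - m) := by
          rw [Real.mul_rpow (by positivity) hS0, mul_comm, ← Real.rpow_natCast (M - m) k,
            ← Real.rpow_mul hD0.le]
          rw [mul_one_div, div_self hknz, Real.rpow_one]
      _ ≤ S ^ ((1:ℝ)/k) * Metric.diam (spectrum ℝ a) :=
          mul_le_mul_of_nonneg_left hdiam (Real.rpow_nonneg hS0 _)
end

section
/- Let X be a real random variable taking finitely many values in [m, M]. If E|X − EX|^k is maximal among all distributions on the same finite value set, then the maximizing distribution is supported on the largest and smallest values; consequently E|X − EX|^k ≤ (M − m)^k · max_{x∈[0,1]} q_k(x), where q_k(x) = x(1−x)^k + x^k(1−x). -/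
open Finset

/-- Convexity of `|·|^k` as a pointwise inequality. -/
lemma abs_pow_convex_aux (k : ℕ) {u v lam : ℝ} (h0 : 0 ≤ lam) (h1 : lam ≤ 1) :
    |lam * u + (1 - lam) * v| ^ k ≤ lam * |u| ^ k + (1 - lam) * |v| ^ k := by
  have h2 : |lam * u + (1 - lam) * v| ≤ lam * |u| + (1 - lam) * |v| := by
    calc |lam * u + (1 - lam) * v| ≤ |lam * u| + |(1 - lam) * v| := abs_add_le _ _
      _ = lam * |u| + (1 - lam) * |v| := by
          rw [abs_mul, abs_mul, abs_of_nonneg h0,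
            abs_of_nonneg (show (0:ℝ) ≤ 1 - lam by linarith)]
  calc |lam * u + (1 - lam) * v| ^ k ≤ (lam * |u| + (1 - lam) * |v|) ^ k :=
        pow_le_pow_left₀ (abs_nonneg _) h2 k
    _ ≤ lam * |u| ^ k + (1 - lam) * |v| ^ k := by
        have := (convexOn_pow k).2 (Set.mem_Ici.2 (abs_nonneg u))
          (Set.mem_Ici.2 (abs_nonneg v)) h0
          (show (0:ℝ) ≤ 1 - lam by linarith) (by ring)
        simpa [smul_eq_mul] using this

/-- For a real random variable taking finitely many values in `[m, M]`, the absolute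
`k`-th central moment `E|X - EX|^k` is maximized by a distribution supported on the
largest and smallest values, and consequently it is bounded by
`(M - m)^k · max_{x ∈ [0,1]} q_k(x)` for every distribution. -/
theorem abs_central_moment_bound {n : ℕ} (hn : 0 < n) (k : ℕ) (hk : 1 ≤ k)
    (x : Fin n → ℝ) (m M : ℝ) (hx : ∀ i, x i ∈ Set.Icc m M) :
    (∀ p : Fin n → ℝ, (∀ i, 0 ≤ p i) → ∑ i, p i = 1 →
        ∑ i, p i * |x i - ∑ j, p j * x j| ^ k
          ≤ (M - m) ^ k *
              sSup ((fun t : ℝ => t * (1 - t) ^ k + t ^ k * (1 - t)) '' Set.Icc 0 1)) ∧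
      ∃ p : Fin n → ℝ, (∀ i, 0 ≤ p i) ∧ ∑ i, p i = 1 ∧
        (∀ q : Fin n → ℝ, (∀ i, 0 ≤ q i) → ∑ i, q i = 1 →
          ∑ i, q i * |x i - ∑ j, q j * x j| ^ k
            ≤ ∑ i, p i * |x i - ∑ j, p j * x j| ^ k) ∧
        ∀ i, p i ≠ 0 → (∀ j, x j ≤ x i) ∨ (∀ j, x i ≤ x j) := by
  classical
  haveI : Nonempty (Fin n) := ⟨⟨0, hn⟩⟩
  set qk : ℝ → ℝ := fun t => t * (1 - t) ^ k + t ^ k * (1 - t) with hqk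
  obtain ⟨i0, -, hi0⟩ := Finset.exists_max_image (univ : Finset (Fin n)) x univ_nonempty
  obtain ⟨i1, -, hi1⟩ := Finset.exists_min_image (univ : Finset (Fin n)) x univ_nonempty
  set a : ℝ := x i1 with haa
  set b : ℝ := x i0 with hbb
  have ha : ∀ j, a ≤ x j := fun j => hi1 j (mem_univ j)
  have hb : ∀ j, x j ≤ b := fun j => hi0 j (mem_univ j)
  have hab : a ≤ b := le_trans (ha i0) le_rfl
  have hma : m ≤ a := (hx i1).1
  have hbM : b ≤ M := (hx i0).2
  have hqknn : ∀ t ∈ Set.Icc (0:ℝ) 1, 0 ≤ qk t := by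
    intro t ht
    have h0 : (0:ℝ) ≤ t := ht.1
    have h1 : (0:ℝ) ≤ 1 - t := by linarith [ht.2]
    positivity
  -- key lemma: for any distribution q, the moment is at most (b-a)^k * qk t for some t
  have key : ∀ q : Fin n → ℝ, (∀ i, 0 ≤ q i) → ∑ i, q i = 1 →
      ∃ t ∈ Set.Icc (0:ℝ) 1,
        ∑ i, q i * |x i - ∑ j, q j * x j| ^ k ≤ (b - a) ^ k * qk t := by
    intro q hq hq1
    set μ : ℝ := ∑ j, q j * x j with hμ
    have hμa : a ≤ μ := by
      have : ∑ j, q j * a ≤ ∑ j, q j * x j :=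
        Finset.sum_le_sum fun j _ => mul_le_mul_of_nonneg_left (ha j) (hq j)
      simpa [← Finset.sum_mul, hq1] using this
    have hμb : μ ≤ b := by
      have : ∑ j, q j * x j ≤ ∑ j, q j * b :=
        Finset.sum_le_sum fun j _ => mul_le_mul_of_nonneg_left (hb j) (hq j)
      simpa [← Finset.sum_mul, hq1] using this
    by_cases hcase : a = b
    · refine ⟨0, by norm_num, ?_⟩
      have hxeq : ∀ j, x j = a := fun j => le_antisymm (hcase ▸ hb j) (ha j)
      have hμeq : μ = a := le_antisymm (hcase ▸ hμb) hμa
      have : ∑ i, q i * |x i - μ| ^ k = 0 := by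
        apply Finset.sum_eq_zero
        intro i _
        rw [hxeq i, hμeq, sub_self, abs_zero, zero_pow (by omega), mul_zero]
      rw [this]
      have : qk 0 = 0 := by simp [hqk, zero_pow (by omega : k ≠ 0)]
      rw [this, mul_zero]
    · have hlt : a < b := lt_of_le_of_ne hab hcase
      have hba : (0:ℝ) < b - a := by linarith
      set t : ℝ := (μ - a) / (b - a) with htdef
      have ht0 : 0 ≤ t := div_nonneg (by linarith) hba.le
      have ht1 : t ≤ 1 := by
        rw [div_le_one hba]; linarith
      refine ⟨t, ⟨ht0, ht1⟩, ?_⟩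
      -- per-term convexity bound
      have hterm : ∀ i, |x i - μ| ^ k ≤
          (b - x i) / (b - a) * (μ - a) ^ k + (x i - a) / (b - a) * (b - μ) ^ k := by
        intro i
        set lam : ℝ := (b - x i) / (b - a) with hlam
        have hl0 : 0 ≤ lam := div_nonneg (by linarith [hb i]) hba.le
        have hl1 : lam ≤ 1 := by rw [div_le_one hba]; linarith [ha i]
        have hcomb : x i - μ = lam * (a - μ) + (1 - lam) * (b - μ) := by
          rw [hlam]; field_simp; ring
        have := abs_pow_convex_aux k (u := a - μ) (v := b - μ) hl0 hl1
        rw [← hcomb] at this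
        have habs1 : |a - μ| = μ - a := by rw [abs_sub_comm, abs_of_nonneg (by linarith)]
        have habs2 : |b - μ| = b - μ := abs_of_nonneg (by linarith)
        rw [habs1, habs2] at this
        calc |x i - μ| ^ k ≤ lam * (μ - a) ^ k + (1 - lam) * (b - μ) ^ k := this
          _ = (b - x i) / (b - a) * (μ - a) ^ k + (x i - a) / (b - a) * (b - μ) ^ k := by
              rw [hlam]; field_simp; try ring
      have hsum : ∑ i, q i * |x i - μ| ^ k ≤
          ∑ i, q i * ((b - x i) / (b - a) * (μ - a) ^ k + (x i - a) / (b - a) * (b - μ) ^ k) :=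
        Finset.sum_le_sum fun i _ => mul_le_mul_of_nonneg_left (hterm i) (hq i)
      have hcalc : ∑ i, q i * ((b - x i) / (b - a) * (μ - a) ^ k + (x i - a) / (b - a) * (b - μ) ^ k)
          = (b - μ) / (b - a) * (μ - a) ^ k + (μ - a) / (b - a) * (b - μ) ^ k := by
        rw [Finset.sum_congr rfl (fun i _ => by ring :
          ∀ i ∈ univ, q i * ((b - x i) / (b - a) * (μ - a) ^ k + (x i - a) / (b - a) * (b - μ) ^ k)
            = (q i * (b - x i)) * ((μ - a) ^ k / (b - a)) + (q i * (x i - a)) * ((b - μ) ^ k / (b - a)))]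
        rw [Finset.sum_add_distrib, ← Finset.sum_mul, ← Finset.sum_mul]
        have e1 : ∑ i, q i * (b - x i) = b - μ := by
          simp only [mul_sub]
          rw [Finset.sum_sub_distrib, ← Finset.sum_mul, hq1, one_mul, hμ]
        have e2 : ∑ i, q i * (x i - a) = μ - a := by
          simp only [mul_sub]
          rw [Finset.sum_sub_distrib, ← Finset.sum_mul, hq1, one_mul, hμ]
        rw [e1, e2]; ring
      have hfin : (b - μ) / (b - a) * (μ - a) ^ k + (μ - a) / (b - a) * (b - μ) ^ k
          = (b - a) ^ k * qk t := by
        have h1 : μ - a = t * (b - a) := by rw [htdef]; field_simp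
        have h2 : b - μ = (1 - t) * (b - a) := by rw [htdef]; field_simp; ring
        rw [hqk]
        rw [h1, h2]
        rw [mul_pow, mul_pow]
        field_simp
        try ring
      rw [hcalc, hfin] at hsum
      exact hsum
  -- continuity of qk, sup bounds
  have hcont : Continuous qk := by rw [hqk]; continuity
  have hbdd : BddAbove (qk '' Set.Icc 0 1) :=
    ((isCompact_Icc.image hcont)).bddAbove
  have hS : ∀ t ∈ Set.Icc (0:ℝ) 1, qk t ≤ sSup (qk '' Set.Icc 0 1) := fun t ht =>
    le_csSup hbdd (Set.mem_image_of_mem qk ht)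
  have hMm : 0 ≤ M - m := by linarith
  have hban : 0 ≤ b - a := by linarith
  have hpow : (b - a) ^ k ≤ (M - m) ^ k := pow_le_pow_left₀ hban (by linarith) k
  constructor
  · intro p hp hp1
    obtain ⟨t, ht, hle⟩ := key p hp hp1
    calc ∑ i, p i * |x i - ∑ j, p j * x j| ^ k ≤ (b - a) ^ k * qk t := hle
      _ ≤ (M - m) ^ k * qk t := mul_le_mul_of_nonneg_right hpow (hqknn t ht)
      _ ≤ (M - m) ^ k * sSup (qk '' Set.Icc 0 1) :=
          mul_le_mul_of_nonneg_left (hS t ht) (by positivity)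
  · -- existence of the maximizer
    obtain ⟨t₀, ht₀mem, ht₀max⟩ := isCompact_Icc.exists_isMaxOn (α := ℝ)
      (Set.nonempty_Icc.2 zero_le_one) hcont.continuousOn
    set p : Fin n → ℝ := fun i =>
      t₀ * (if i = i0 then 1 else 0) + (1 - t₀) * (if i = i1 then 1 else 0) with hpdef
    have hpnn : ∀ i, 0 ≤ p i := by
      intro i
      have h0 : (0:ℝ) ≤ t₀ := ht₀mem.1
      have h1 : (0:ℝ) ≤ 1 - t₀ := by linarith [ht₀mem.2]
      rw [hpdef]
      positivity
    have hp1 : ∑ i, p i = 1 := by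
      rw [hpdef]
      simp [Finset.sum_add_distrib, ← Finset.mul_sum, mul_ite]
    have hmean : ∑ j, p j * x j = t₀ * b + (1 - t₀) * a := by
      rw [hpdef]
      simp only [add_mul, mul_assoc, ite_mul, one_mul, zero_mul]
      rw [Finset.sum_add_distrib, ← Finset.mul_sum, ← Finset.mul_sum]
      rw [Finset.sum_ite_eq' univ i0 x, Finset.sum_ite_eq' univ i1 x]
      simp [haa, hbb]
    have h0t : (0:ℝ) ≤ t₀ := ht₀mem.1
    have h1t : (0:ℝ) ≤ 1 - t₀ := by linarith [ht₀mem.2]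
    have hval : ∑ i, p i * |x i - ∑ j, p j * x j| ^ k = (b - a) ^ k * qk t₀ := by
      rw [hmean, hpdef]
      simp only [add_mul, mul_assoc, ite_mul, one_mul, zero_mul]
      rw [Finset.sum_add_distrib, ← Finset.mul_sum, ← Finset.mul_sum]
      rw [Finset.sum_ite_eq' univ i0 (fun i => |x i - (t₀ * b + (1 - t₀) * a)| ^ k),
        Finset.sum_ite_eq' univ i1 (fun i => |x i - (t₀ * b + (1 - t₀) * a)| ^ k)]
      simp only [mem_univ, if_true]
      have e1 : x i0 - (t₀ * b + (1 - t₀) * a) = (1 - t₀) * (b - a) := by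
        simp only [haa, hbb]; ring
      have e2 : x i1 - (t₀ * b + (1 - t₀) * a) = -(t₀ * (b - a)) := by
        simp only [haa, hbb]; ring
      rw [e1, e2, abs_of_nonneg (by positivity), abs_neg, abs_of_nonneg (by positivity)]
      rw [hqk, mul_pow, mul_pow]
      ring
    refine ⟨p, hpnn, hp1, ?_, ?_⟩
    · intro q hq hq1
      obtain ⟨t, ht, hle⟩ := key q hq hq1
      calc ∑ i, q i * |x i - ∑ j, q j * x j| ^ k ≤ (b - a) ^ k * qk t := hle
        _ ≤ (b - a) ^ k * qk t₀ :=
            mul_le_mul_of_nonneg_left (ht₀max ht) (by positivity)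
        _ = ∑ i, p i * |x i - ∑ j, p j * x j| ^ k := hval.symm
    · intro i hi
      rw [hpdef] at hi
      by_cases h : i = i0
      · left; intro j; rw [h, ← hbb]; exact hb j
      · by_cases h' : i = i1
        · right; intro j; rw [h', ← haa]; exact ha j
        · exfalso; apply hi; simp [h, h']
end

section
/- Let A be the 3×3 diagonal unitary matrix with entries 1, e^{2πi/3}, e^{4πi/3}. Then the maximal weak second central moment satisfies max over probability vectors (p₁,p₂,p₃) of |E(X²) − E(X)²| ≤ 3/4, where X takes the three cube roots of unity with probabilities p_i; equivalently the weak deviation (max |ω((A−ω(A))²)|)^{1/2} over states of C*(A) is at most √3/2, which is strictly less than Δ₂(A) = 1. -/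
open Finset Complex

theorem cube_aux_quad (s m B C : ℝ) (hs0 : 0 ≤ s) (hsm : s ≤ m) (hf0 : C ≤ 9/16)
    (hfm : m^2 + B*m + C ≤ 9/16) : s^2 + B*s + C ≤ 9/16 := by
  rcases le_or_gt (B + m) 0 with h | h
  · nlinarith [mul_nonneg hs0 (by linarith : (0:ℝ) ≤ -(s+B))]
  · nlinarith [mul_nonneg (by linarith : (0:ℝ) ≤ m - s) (by linarith : (0:ℝ) ≤ s + m + B)]

theorem cube_aux_ineq (x t : ℝ) (h1 : -1/2 ≤ x) (h2 : x + t ≤ 1) (h3 : x - t ≤ 1) :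
    (x - x^2 + t^2/3)^2 + (t^2/3)*(1+2*x)^2 ≤ 9/16 := by
  have hx1 : x ≤ 1 := by linarith
  have hexp : (x - x^2 + t^2/3)^2 + (t^2/3)*(1+2*x)^2
      = (t^2/3)^2 + (2*(x-x^2) + (1+2*x)^2)*(t^2/3) + (x-x^2)^2 := by ring
  rw [hexp]
  refine cube_aux_quad _ ((1-x)^2/3) _ _ (by positivity) ?_ ?_ ?_
  · nlinarith [mul_nonneg (by linarith : (0:ℝ) ≤ 1-x-t) (by linarith : (0:ℝ) ≤ 1-x+t)]
  · nlinarith [mul_nonneg (by linarith : (0:ℝ) ≤ x+1/2) (by linarith : (0:ℝ) ≤ 3/2-x),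
      sq_nonneg (x-1/2), sq_nonneg (x*(1-x))]
  · nlinarith [sq_nonneg ((x+1/2)*(x-1/4)), sq_nonneg ((1-x)*(x-1/4)), sq_nonneg (x-1/4),
      mul_nonneg (mul_nonneg (by linarith : (0:ℝ) ≤ x+1/2) (by linarith : (0:ℝ) ≤ 1-x)) (sq_nonneg (x-1/4))]

theorem cube_exp1 : Complex.exp (2 * Real.pi * Complex.I / 3) = ⟨-(1/2), Real.sqrt 3/2⟩ := by
  have h : (2 * (Real.pi:ℂ) * I / 3) = ((2*Real.pi/3 : ℝ) : ℂ) * I := by push_cast; ring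
  rw [h, Complex.exp_mul_I]
  rw [show (2*Real.pi/3 : ℝ) = Real.pi - Real.pi/3 by ring]
  rw [← Complex.ofReal_cos, ← Complex.ofReal_sin, Real.cos_pi_sub, Real.sin_pi_sub,
    Real.cos_pi_div_three, Real.sin_pi_div_three]
  apply Complex.ext <;> simp

theorem cube_exp2 : Complex.exp (4 * Real.pi * Complex.I / 3) = ⟨-(1/2), -(Real.sqrt 3/2)⟩ := by
  have h : (4 * (Real.pi:ℂ) * I / 3) = ((Real.pi/3 + Real.pi : ℝ) : ℂ) * I := by push_cast; ring
  rw [h, Complex.exp_mul_I]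
  rw [← Complex.ofReal_cos, ← Complex.ofReal_sin, Real.cos_add_pi, Real.sin_add_pi,
    Real.cos_pi_div_three, Real.sin_pi_div_three]
  apply Complex.ext <;> simp

theorem cube_part1 (a b c s : ℝ) (hs : s^2 = 3) (ha : 0 ≤ a) (hb : 0 ≤ b) (hc : 0 ≤ c)
    (hsum : a + b + c = 1) :
    norm ((a:ℂ) * 1 ^ 2 + (b:ℂ) * (⟨-(1/2), s/2⟩:ℂ) ^ 2 + (c:ℂ) * (⟨-(1/2), -(s/2)⟩:ℂ) ^ 2
      - ((a:ℂ) * 1 + (b:ℂ) * (⟨-(1/2), s/2⟩:ℂ) + (c:ℂ) * (⟨-(1/2), -(s/2)⟩:ℂ)) ^ 2) ≤ 3/4 := by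
  have hc1 : c = 1 - a - b := by linarith
  subst hc1
  set w : ℂ := ((a:ℂ) * 1 ^ 2 + (b:ℂ) * (⟨-(1/2), s/2⟩:ℂ) ^ 2 + ((1-a-b:ℝ):ℂ) * (⟨-(1/2), -(s/2)⟩:ℂ) ^ 2
      - ((a:ℂ) * 1 + (b:ℂ) * (⟨-(1/2), s/2⟩:ℂ) + ((1-a-b:ℝ):ℂ) * (⟨-(1/2), -(s/2)⟩:ℂ)) ^ 2) with hw
  clear_value w
  have hre : w.re = (3*a-1)/2 - ((3*a-1)/2)^2 + 3*(2*b-1+a)^2/4 := by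
    rw [hw]
    simp only [Complex.sub_re, Complex.add_re, Complex.mul_re, Complex.mul_im,
      Complex.ofReal_re, Complex.ofReal_im, pow_two, Complex.sub_im, Complex.add_im,
      Complex.one_re, Complex.one_im]
    ring_nf
    rw [hs]; ring
  have him : w.im = -(s/2) * (2*b-1+a) * (1 + 2*((3*a-1)/2)) := by
    rw [hw]
    simp only [Complex.sub_re, Complex.add_re, Complex.mul_re, Complex.mul_im,
      Complex.ofReal_re, Complex.ofReal_im, pow_two, Complex.sub_im, Complex.add_im,
      Complex.one_re, Complex.one_im]
    ring_nf
  have hsq : norm w ^ 2 ≤ (3/4:ℝ)^2 := by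
    rw [Complex.sq_norm, Complex.normSq_apply, hre, him]
    have key := cube_aux_ineq ((3*a-1)/2) (3*(2*b-1+a)/2) (by linarith) (by linarith) (by linarith)
    nlinarith [key, hs, sq_nonneg (2*b-1+a), sq_nonneg ((2*b-1+a)*(1+2*((3*a-1)/2)))]
  nlinarith [hsq, norm_nonneg w]

theorem cube_part3_ub (a b c s : ℝ) (hs : s^2 = 3) (ha : 0 ≤ a) (hb : 0 ≤ b) (hc : 0 ≤ c)
    (hsum : a + b + c = 1) :
    a * norm ((1:ℂ) - ((a:ℂ) * 1 + (b:ℂ) * (⟨-(1/2), s/2⟩:ℂ) + (c:ℂ) * (⟨-(1/2), -(s/2)⟩:ℂ))) ^ 2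
    + b * norm ((⟨-(1/2), s/2⟩:ℂ) - ((a:ℂ) * 1 + (b:ℂ) * (⟨-(1/2), s/2⟩:ℂ) + (c:ℂ) * (⟨-(1/2), -(s/2)⟩:ℂ))) ^ 2
    + c * norm ((⟨-(1/2), -(s/2)⟩:ℂ) - ((a:ℂ) * 1 + (b:ℂ) * (⟨-(1/2), s/2⟩:ℂ) + (c:ℂ) * (⟨-(1/2), -(s/2)⟩:ℂ))) ^ 2
    ≤ 1 := by
  have hc1 : c = 1 - a - b := by linarith
  subst hc1
  simp only [Complex.sq_norm, Complex.normSq_apply, Complex.sub_re, Complex.add_re,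
    Complex.mul_re, Complex.mul_im, Complex.ofReal_re, Complex.ofReal_im,
    Complex.sub_im, Complex.add_im, Complex.one_re, Complex.one_im]
  ring_nf
  rw [hs]
  nlinarith [sq_nonneg (3*a-1), sq_nonneg (2*b-1+a)]

theorem cube_part3_mem (s : ℝ) (hs : s^2 = 3) :
    (1:ℝ) = 1/3 * norm ((1:ℂ) - (((1/3:ℝ):ℂ) * 1 + ((1/3:ℝ):ℂ) * (⟨-(1/2), s/2⟩:ℂ) + ((1/3:ℝ):ℂ) * (⟨-(1/2), -(s/2)⟩:ℂ))) ^ 2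
    + 1/3 * norm ((⟨-(1/2), s/2⟩:ℂ) - (((1/3:ℝ):ℂ) * 1 + ((1/3:ℝ):ℂ) * (⟨-(1/2), s/2⟩:ℂ) + ((1/3:ℝ):ℂ) * (⟨-(1/2), -(s/2)⟩:ℂ))) ^ 2
    + 1/3 * norm ((⟨-(1/2), -(s/2)⟩:ℂ) - (((1/3:ℝ):ℂ) * 1 + ((1/3:ℝ):ℂ) * (⟨-(1/2), s/2⟩:ℂ) + ((1/3:ℝ):ℂ) * (⟨-(1/2), -(s/2)⟩:ℂ))) ^ 2 := by
  simp only [Complex.sq_norm, Complex.normSq_apply, Complex.sub_re, Complex.add_re,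
    Complex.mul_re, Complex.mul_im, Complex.ofReal_re, Complex.ofReal_im,
    Complex.sub_im, Complex.add_im, Complex.one_re, Complex.one_im]
  ring_nf
  rw [hs]
  ring

/-- For the normal matrix `A = diag(1, e^{2πi/3}, e^{4πi/3})`: for every probability
distribution on the three cube roots of unity, the weak second central moment satisfies
`|E(X²) − (E X)²| ≤ 3/4` (so the weak deviation is at most `√3/2`), which is strictly
less than `Δ₂(A) = 1`, the maximal second central moment (here realized over probability
distributions on the eigenvalues of `A`). -/
theorem cube_roots_weak_second_moment (z : Fin 3 → ℂ)
    (hz : z = ![1, Complex.exp (2 * Real.pi * Complex.I / 3),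
      Complex.exp (4 * Real.pi * Complex.I / 3)]) :
    (∀ p : Fin 3 → ℝ, (∀ i, 0 ≤ p i) → ∑ i, p i = 1 →
        ‖∑ i, (p i : ℂ) * z i ^ 2 - (∑ i, (p i : ℂ) * z i) ^ 2‖ ≤ 3 / 4) ∧
      Real.sqrt 3 / 2 < 1 ∧
      IsGreatest {r : ℝ | ∃ p : Fin 3 → ℝ, (∀ i, 0 ≤ p i) ∧ ∑ i, p i = 1 ∧
          r = ∑ i, p i * ‖z i - ∑ j, (p j : ℂ) * z j‖ ^ 2} 1 := by
  have h3 : Real.sqrt 3 ^ 2 = 3 := Real.sq_sqrt (by norm_num)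
  have hz0 : z 0 = 1 := by rw [hz]; rfl
  have hz1 : z 1 = ⟨-(1/2), Real.sqrt 3/2⟩ := by rw [hz]; exact cube_exp1
  have hz2 : z 2 = ⟨-(1/2), -(Real.sqrt 3/2)⟩ := by rw [hz]; exact cube_exp2
  refine ⟨?_, ?_, ?_, ?_⟩
  · intro p hp hsum
    rw [Fin.sum_univ_three] at hsum
    simp only [Fin.sum_univ_three, hz0, hz1, hz2]
    exact cube_part1 (p 0) (p 1) (p 2) _ h3 (hp 0) (hp 1) (hp 2) hsum
  · nlinarith [h3, Real.sqrt_nonneg 3]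
  · refine ⟨fun _ => 1/3, fun i => by norm_num, by rw [Fin.sum_univ_three]; norm_num, ?_⟩
    simp only [Fin.sum_univ_three, hz0, hz1, hz2]
    exact cube_part3_mem _ h3
  · rintro r ⟨p, hp, hsum, rfl⟩
    rw [Fin.sum_univ_three] at hsum
    simp only [Fin.sum_univ_three, hz0, hz1, hz2]
    exact cube_part3_ub (p 0) (p 1) (p 2) _ h3 (hp 0) (hp 1) (hp 2) hsum
end
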